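/- For every k ≥ 2, the first-order part of BWT_k is not strongly Weihrauch reducible to RT¹_k. -/
import Mathlib


open Classical

/-- A Turing functional, presented by a monotone computable map on finite prefixes
of the oracle. -/
structure Functional where
  eval : List ℕ → ℕ → Option ℕ
  mono : ∀ σ τ x y, σ <+: τ → eval σ x = some y → eval τ x = some y
  comp : Computable₂ eval

/-- The finite initial segment of `f` of length `k`. -/
def initSeg (f : ℕ → ℕ) (k : ℕ) : List ℕ := (List.range k).map f

/-- `Φ(f)(x)` converges with value `y`. -/
def Functional.conv (Φ : Functional) (f : ℕ → ℕ) (x y : ℕ) : Prop :=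
  ∃ k, Φ.eval (initSeg f k) x = some y

/-- Total application: `Φ(f) = g`. -/
def Functional.Total (Φ : Functional) (f g : ℕ → ℕ) : Prop :=
  ∀ x, Φ.conv f x (g x)

/-- The Turing join of two elements of Baire space. -/
def join (f g : ℕ → ℕ) : ℕ → ℕ := fun n => if n % 2 = 0 then f (n / 2) else g (n / 2)

/-- The embedding of `ℕ` into Baire space: `n` is identified with `n,0,0,0,…`. -/
def natSeq (n : ℕ) : ℕ → ℕ := fun i => if i = 0 then n else 0

/-- A problem: a partial multifunction on Baire space, given by its domain
(the set of instances) and, for each instance, its set of solutions. -/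
structure Problem where
  dom : Set (ℕ → ℕ)
  sol : (ℕ → ℕ) → Set (ℕ → ℕ)

/-- Weihrauch reducibility `Q ≤_W P`. -/
def WRed (Q P : Problem) : Prop :=
  ∃ Φ Ψ : Functional, ∀ f ∈ Q.dom, ∃ h, Φ.Total f h ∧ h ∈ P.dom ∧
    ∀ g ∈ P.sol h, ∃ y, Ψ.Total (join f g) y ∧ y ∈ Q.sol f

/-- Strong Weihrauch reducibility `Q ≤_sW P`: the backward functional only sees the solution. -/
def SRed (Q P : Problem) : Prop :=
  ∃ Φ Ψ : Functional, ∀ f ∈ Q.dom, ∃ h, Φ.Total f h ∧ h ∈ P.dom ∧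
    ∀ g ∈ P.sol h, ∃ y, Ψ.Total g y ∧ y ∈ Q.sol f

/-- Weihrauch equivalence. -/
def WEquiv (Q P : Problem) : Prop := WRed Q P ∧ WRed P Q

/-- Strong Weihrauch equivalence. -/
def SEquiv (Q P : Problem) : Prop := SRed Q P ∧ SRed P Q

/-- A problem is first-order if all its solutions are natural numbers
(under the identification of `n` with `natSeq n`). -/
def FirstOrder (P : Problem) : Prop :=
  ∀ f ∈ P.dom, ∀ g ∈ P.sol f, ∃ n, g = natSeq n

/-- The code of a functional as an element of Baire space (the graph of its
prefix-evaluation function). -/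
def Functional.graph (Φ : Functional) : ℕ → ℕ :=
  fun n => Encodable.encode (Φ.eval (Denumerable.ofNat (List ℕ) n.unpair.1) n.unpair.2)

/-- The first-order part `¹P` of a problem `P`: instances are (codes of) triples
`⟨f,Φ,Ψ⟩` with `Φ(f) ∈ dom(P)` and `Ψ(f,g)(0)↓` for all `g ∈ P(Φ(f))`; the
solutions are all values `Ψ(f,g)(0)` for `g ∈ P(Φ(f))`. -/
def FOPart (P : Problem) : Problem where
  dom := { h | ∃ (f : ℕ → ℕ) (Φ Ψ : Functional), h = join f (join Φ.graph Ψ.graph) ∧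
    ∃ p, Φ.Total f p ∧ p ∈ P.dom ∧ ∀ g ∈ P.sol p, ∃ y, Ψ.conv (join f g) 0 y }
  sol h := { w | ∃ (f : ℕ → ℕ) (Φ Ψ : Functional) (p g : ℕ → ℕ) (y : ℕ),
    h = join f (join Φ.graph Ψ.graph) ∧ Φ.Total f p ∧ p ∈ P.dom ∧ g ∈ P.sol p ∧
    Ψ.conv (join f g) 0 y ∧ w = natSeq y }

/-- `P` is computably true: every instance computes one of its solutions. -/
def ComputablyTrue (P : Problem) : Prop :=
  ∀ f ∈ P.dom, ∃ g ∈ P.sol f, ∃ Φ : Functional, Φ.Total f g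

/-- `P` is uniformly computably true: a single functional solves every instance. -/
def UnifCompTrue (P : Problem) : Prop :=
  ∃ Φ : Functional, ∀ f ∈ P.dom, ∃ g, Φ.Total f g ∧ g ∈ P.sol f

/-- `σ` is a finite initial segment of some `P`-solution to `f`. -/
def Extendible (P : Problem) (f : ℕ → ℕ) (σ : List ℕ) : Prop :=
  ∃ g ∈ P.sol f, σ = initSeg g σ.length

/-- `P` is undiagonalizable: the set of strings extendible to a solution is
uniformly decidable from the instance. -/
def Undiag (P : Problem) : Prop :=
  ∃ Γ : Functional, ∀ f ∈ P.dom, ∀ σ : List ℕ,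
    (Extendible P f σ → Γ.conv f (Encodable.encode σ) 1) ∧
    (¬ Extendible P f σ → Γ.conv f (Encodable.encode σ) 0)

/-- `RT¹_k`: instances are colorings `c : ℕ → k`; solutions are (characteristic
functions of) infinite sets on which `c` is constant. -/
def RT1 (k : ℕ) : Problem where
  dom := { c | ∀ x, c x < k }
  sol c := { h | (∀ x, h x ≤ 1) ∧ {x | h x = 1}.Infinite ∧ ∃ i, ∀ x, h x = 1 → c x = i }

/-- `BWT_k`: instances are colorings `c : ℕ → k`; solutions are the colors
attained infinitely often. -/
def BWT (k : ℕ) : Problem where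
  dom := { c | ∀ x, c x < k }
  sol c := { w | ∃ i, i < k ∧ {x | c x = i}.Infinite ∧ w = natSeq i }

section Aux

/-- Initial segments are nested. -/
lemma initSeg_prefix (f : ℕ → ℕ) {m n : ℕ} (h : m ≤ n) :
    initSeg f m <+: initSeg f n := by
  have : initSeg f m = (initSeg f n).take m := by
    simp [initSeg, ← List.map_take, List.take_range, h]
  rw [this]; exact List.take_prefix _ _

/-- Convergence values are unique. -/
lemma Functional.conv_unique {Φ : Functional} {f : ℕ → ℕ} {x y y' : ℕ}
    (h : Φ.conv f x y) (h' : Φ.conv f x y') : y = y' := by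
  obtain ⟨m, hm⟩ := h
  obtain ⟨n, hn⟩ := h'
  rcases le_total m n with hmn | hmn
  · have := Φ.mono _ _ _ _ (initSeg_prefix f hmn) hm
    rw [this] at hn; exact Option.some_injective _ hn
  · have := Φ.mono _ _ _ _ (initSeg_prefix f hmn) hn
    rw [this] at hm; exact (Option.some_injective _ hm).symm

/-- Two functionals with the same eval have the same conv. -/
lemma Functional.conv_congr {Φ Φ' : Functional} (h : Φ.eval = Φ'.eval)
    {f : ℕ → ℕ} {x y : ℕ} (hc : Φ.conv f x y) : Φ'.conv f x y := by
  obtain ⟨m, hm⟩ := hc; exact ⟨m, h ▸ hm⟩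

/-- Graph determines eval. -/
lemma Functional.graph_inj {Φ Φ' : Functional} (h : Φ.graph = Φ'.graph) :
    Φ.eval = Φ'.eval := by
  funext σ x
  have := congrFun h (Nat.pair (Encodable.encode σ) x)
  simp only [Functional.graph, Nat.unpair_pair, Denumerable.ofNat_encode] at this
  exact Encodable.encode_injective this

lemma join_fst (f g : ℕ → ℕ) (n : ℕ) : join f g (2 * n) = f n := by
  simp [join, Nat.mul_div_cancel_left _ (two_pos), Nat.mul_mod_right]

lemma join_snd (f g : ℕ → ℕ) (n : ℕ) : join f g (2 * n + 1) = g n := by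
  have h1 : (2 * n + 1) % 2 = 1 := by omega
  have h2 : (2 * n + 1) / 2 = n := by omega
  simp [join, h1, h2]

lemma join_inj {f g f' g' : ℕ → ℕ} (h : join f g = join f' g') : f = f' ∧ g = g' := by
  constructor
  · funext n
    have := congrFun h (2 * n); rwa [join_fst, join_fst] at this
  · funext n
    have := congrFun h (2 * n + 1); rwa [join_snd, join_snd] at this

/-- The functional constantly outputting `0`. -/
def Phi0 : Functional where
  eval := fun _ _ => some 0
  mono := fun _ _ _ _ _ h => h
  comp := Computable.const _

lemma Phi0_total (f : ℕ → ℕ) : Phi0.Total f (fun _ => 0) :=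
  fun x => ⟨0, rfl⟩

/-- The functional reading position `0` of its oracle. -/
def Psi0 : Functional where
  eval := fun σ _ => σ.head?
  mono := by
    rintro σ τ x y ⟨t, rfl⟩ h
    cases σ with
    | nil => simp at h
    | cons a l => simpa using h
  comp := (Primrec.list_head?.comp Primrec.fst).to_comp

lemma Psi0_conv (f g : ℕ → ℕ) : Psi0.conv (join f g) 0 (f 0) := by
  refine ⟨1, ?_⟩
  have : join f g 0 = f 0 := by simpa using join_fst f g 0
  simp [Psi0, initSeg, List.range_succ, this]

/-- The adversarial instance of the first-order part: its unique solution value is `f 0`. -/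
def inst (f : ℕ → ℕ) : ℕ → ℕ := join f (join Phi0.graph Psi0.graph)

lemma inst_mem_dom (k : ℕ) (hk : 2 ≤ k) (f : ℕ → ℕ) : inst f ∈ (FOPart (BWT k)).dom := by
  refine ⟨f, Phi0, Psi0, rfl, fun _ => 0, Phi0_total f, fun _ => lt_of_lt_of_le (by norm_num) hk, ?_⟩
  intro g _
  exact ⟨f 0, Psi0_conv f g⟩

lemma inst_sol (k : ℕ) (f w : ℕ → ℕ) (hw : w ∈ (FOPart (BWT k)).sol (inst f)) :
    w = natSeq (f 0) := by
  obtain ⟨f₁, Φ₁, Ψ₁, p, g₁, y₁, he, _, _, _, hc, hw⟩ := hw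
  obtain ⟨hf, hj⟩ := join_inj he
  obtain ⟨hΦ, hΨ⟩ := join_inj hj
  subst hf
  have hΨe : Ψ₁.eval = Psi0.eval := (Functional.graph_inj hΨ).symm
  have h1 : Psi0.conv (join f g₁) 0 y₁ := Functional.conv_congr hΨe hc
  have h2 : Psi0.conv (join f g₁) 0 (f 0) := Psi0_conv f g₁
  rw [hw, Functional.conv_unique h1 h2]

end Aux

theorem FOPart_BWT_not_SRed_RT1 (k : ℕ) (hk : 2 ≤ k) :
    ¬ SRed (FOPart (BWT k)) (RT1 k) := by
  rintro ⟨Φ, Ψ, hred⟩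
  obtain ⟨c0, hT0, hd0, hs0⟩ := hred (inst (fun _ => 0)) (inst_mem_dom k hk _)
  obtain ⟨c1, hT1, hd1, hs1⟩ := hred (inst (fun _ => 1)) (inst_mem_dom k hk _)
  set F : ℕ → Fin k × Fin k := fun x => (⟨c0 x, hd0 x⟩, ⟨c1 x, hd1 x⟩) with hF
  obtain ⟨⟨i, j⟩, hfib⟩ := Finite.exists_infinite_fiber F
  have hinf : (F ⁻¹' {(i, j)}).Infinite := Set.infinite_coe_iff.mp hfib
  set g : ℕ → ℕ := fun x => if c0 x = i.val ∧ c1 x = j.val then 1 else 0 with hg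
  have hmem : ∀ x, g x = 1 ↔ (c0 x = i.val ∧ c1 x = j.val) := by
    intro x; by_cases h : c0 x = i.val ∧ c1 x = j.val <;> simp [hg, h]
  have hset : {x | g x = 1} = F ⁻¹' {(i, j)} := by
    ext x
    simp [hmem x, hF, Prod.ext_iff, Fin.ext_iff, Set.mem_preimage]
  have hginf : {x | g x = 1}.Infinite := hset ▸ hinf
  have hgle : ∀ x, g x ≤ 1 := by
    intro x; simp only [hg]; split <;> omega
  have hgs0 : g ∈ (RT1 k).sol c0 := ⟨hgle, hginf, i.val, fun x hx => ((hmem x).1 hx).1⟩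
  have hgs1 : g ∈ (RT1 k).sol c1 := ⟨hgle, hginf, j.val, fun x hx => ((hmem x).1 hx).2⟩
  obtain ⟨y0, hty0, hy0⟩ := hs0 g hgs0
  obtain ⟨y1, hty1, hy1⟩ := hs1 g hgs1
  have e0 : y0 = natSeq 0 := inst_sol k _ _ hy0
  have e1 : y1 = natSeq 1 := inst_sol k _ _ hy1
  have h01 : y0 0 = y1 0 := Functional.conv_unique (hty0 0) (hty1 0)
  rw [e0, e1] at h01
  simp [natSeq] at h01
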